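/- Let $S$ be a string and $\tau \ge 1$. If $j-1, j \in \mathsf{R}(\tau,S)$, then $S[j-1..j-1+p)$ and $S[j..j+p)$ are cyclically equivalent (rotations of each other), where $p = \mathrm{per}(S[j..j+3\tau-2])$. -/
import Mathlib


/-- Length of the longest common prefix of two lists. -/
def lcpLen {α : Type*} [DecidableEq α] : List α → List α → ℕ
  | a :: s, b :: t => if a = b then lcpLen s t + 1 else 0
  | _, _ => 0

/-- The fragment `T[a..a+len)` of a (1-indexed) text `T : ℕ → α`. -/
def frag {α : Type*} (T : ℕ → α) (a len : ℕ) : List α :=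
  (List.range len).map (fun t => T (a + t))

/-- The suffix `T[j..n]` of a text of length `n`. -/
def suff {α : Type*} (T : ℕ → α) (n j : ℕ) : List α := frag T j (n + 1 - j)

/-- The fragment `T^∞[j..j+ℓ)` of the infinite periodic extension of `T[1..n]`. -/
def tinf {α : Type*} (T : ℕ → α) (n j ℓ : ℕ) : List α :=
  (List.range ℓ).map (fun t => T ((j + t - 1) % n + 1))

/-- `p` is a period of the list `X`. -/
def hasPer {α : Type*} (X : List α) (p : ℕ) : Prop :=
  ∀ i, i + p < X.length → X[i]? = X[i + p]?

/-- The shortest period of a list. -/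
noncomputable def per {α : Type*} (X : List α) : ℕ := sInf {p | 1 ≤ p ∧ hasPer X p}

/-- `runEnd S n i p` is the maximal `e ≤ n+1` such that `S[i..e)` has period `p`,
i.e. `S[i..runEnd S n i p)` is the longest prefix of `S[i..n]` with period `p`. -/
noncomputable def runEnd {α : Type*} (S : ℕ → α) (n i p : ℕ) : ℕ :=
  sSup {e | i ≤ e ∧ e ≤ n + 1 ∧ ∀ t, i ≤ t → t + p < e → S t = S (t + p)}


lemma frag_length {α : Type*} (T : ℕ → α) (a len : ℕ) : (frag T a len).length = len := by
  simp [frag]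

lemma frag_getElem {α : Type*} (T : ℕ → α) (a len i : ℕ) (h : i < (frag T a len).length) :
    (frag T a len)[i] = T (a + i) := by
  simp [frag]

lemma per_spec {α : Type*} (X : List α) : 1 ≤ per X ∧ hasPer X (per X) := by
  have hne : {p | 1 ≤ p ∧ hasPer X p}.Nonempty := by
    refine ⟨X.length + 1, by omega, fun i hi => by omega⟩
  exact Nat.sInf_mem hne

lemma frag_per {α : Type*} (T : ℕ → α) (a len p i : ℕ)
    (hp : hasPer (frag T a len) p) (hi : i + p < len) : T (a + i) = T (a + i + p) := by
  have := hp i (by rwa [frag_length])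
  rw [List.getElem?_eq_getElem (by rw [frag_length]; omega),
      List.getElem?_eq_getElem (by rw [frag_length]; omega)] at this
  simpa [frag_getElem, Nat.add_assoc] using this

/-- Lemma `lm:R-block` (root is preserved up to rotation): if `j-1, j ∈ R(τ,S)` then
`S[j-1..j-1+p)` and `S[j..j+p)` are cyclically equivalent, where
`p = per(S[j..j+3τ-2])`. -/
theorem run_block_roots_isRotated {α : Type*} [LinearOrder α] (S : ℕ → α) (k τ : ℕ)
    (hτ : 1 ≤ τ) (j : ℕ) (hj : 2 ≤ j) (hjk : j + 3 * τ ≤ k + 2)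
    (hmem : 3 * per (frag S (j - 1) (3 * τ - 1)) ≤ τ)
    (hmem' : 3 * per (frag S j (3 * τ - 1)) ≤ τ) :
    (frag S (j - 1) (per (frag S j (3 * τ - 1)))) ~r
      (frag S j (per (frag S j (3 * τ - 1)))) := by
  set p := per (frag S j (3 * τ - 1)) with hp
  set q := per (frag S (j - 1) (3 * τ - 1)) with hq
  obtain ⟨hp1, hpP⟩ := per_spec (frag S j (3 * τ - 1))
  obtain ⟨hq1, hqP⟩ := per_spec (frag S (j - 1) (3 * τ - 1))
  rw [← hp] at hp1 hpP; rw [← hq] at hq1 hqP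
  -- key: S (j-1) = S (j-1+p)
  have e1 : S (j - 1 + 0) = S (j - 1 + 0 + q) :=
    frag_per S (j - 1) (3 * τ - 1) q 0 hqP (by omega)
  have e2 : S (j + (q - 1)) = S (j + (q - 1) + p) :=
    frag_per S j (3 * τ - 1) p (q - 1) hpP (by omega)
  have e3 : S (j - 1 + p) = S (j - 1 + p + q) :=
    frag_per S (j - 1) (3 * τ - 1) q p hqP (by omega)
  have hjq : j + (q - 1) = j - 1 + q := by omega
  have hjpq : j + (q - 1) + p = j - 1 + p + q := by omega
  have e2' : S (j - 1 + q) = S (j - 1 + p + q) := by rw [← hjq, ← hjpq]; exact e2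
  have key : S (j - 1) = S (j - 1 + p) := by
    simpa using e1.trans (e2'.trans e3.symm)
  refine ⟨1, ?_⟩
  apply List.ext_getElem
  · simp [frag_length]
  · intro i h1 h2
    rw [frag_length] at h2
    simp only [List.getElem_rotate, frag_getElem, frag_length]
    rcases Nat.lt_or_ge (i + 1) p with hlt | hge
    · rw [Nat.mod_eq_of_lt hlt]
      congr 1; omega
    · have hip : i + 1 = p := by omega
      rw [hip, Nat.mod_self, Nat.add_zero]
      have : j + i = j - 1 + p := by omega
      rw [this, ← key]
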